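/- arXiv:1210.6778 — 5 statements merged into one kernel-verified Lean document; each statement's English description precedes it below -/
import Mathlib

section
/- For any locally integrable function b on ℝⁿ, any locally integrable f, and any x ∈ ℝⁿ, the pointwise bound |[M,b]f(x) − [M,|b|]f(x)| ≤ 2 b⁻(x) Mf(x) holds, where [M,g]f = M(gf) − g·Mf and b⁻ = max(−b,0). -/
open MeasureTheory Metric

/-- The (uncentered) Hardy–Littlewood maximal function over cubes of `ℝⁿ`.
Since `Fin n → ℝ` carries the sup norm, metric balls are exactly the open cubes
with sides parallel to the axes. -/
noncomputable def maximalFn {n : ℕ} (f : (Fin n → ℝ) → ℝ) (x : Fin n → ℝ) : ℝ :=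
  ⨆ Q : {Q : (Fin n → ℝ) × ℝ // 0 < Q.2 ∧ x ∈ ball Q.1 Q.2},
    ⨍ y in ball Q.1.1 Q.1.2, |f y|

/-- The maximal commutator `C_b(f)(x) = sup_{Q ∋ x} ⨍_Q |b(x) − b(y)| |f(y)| dy`. -/
noncomputable def maximalComm {n : ℕ} (b f : (Fin n → ℝ) → ℝ) (x : Fin n → ℝ) : ℝ :=
  ⨆ Q : {Q : (Fin n → ℝ) × ℝ // 0 < Q.2 ∧ x ∈ ball Q.1 Q.2},
    ⨍ y in ball Q.1.1 Q.1.2, |b x - b y| * |f y|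

/-! `M` only sees `|f|`, and `|b f| = ||b| f|`, so `M(bf) = M(|b|f)`. The two commutators
therefore differ by exactly `(|b(x)| - b(x)) Mf(x) = 2 b⁻(x) Mf(x)`: the bound is an equality. -/

theorem maximalFn_nonneg {n : ℕ} (f : (Fin n → ℝ) → ℝ) (x : Fin n → ℝ) : 0 ≤ maximalFn f x :=
  Real.iSup_nonneg fun _ => integral_nonneg fun _ => abs_nonneg _

theorem maximalFn_congr_abs {n : ℕ} {f g : (Fin n → ℝ) → ℝ} (h : ∀ y, |f y| = |g y|)
    (x : Fin n → ℝ) : maximalFn f x = maximalFn g x := by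
  simp only [maximalFn, h]

theorem maximalFn_abs_mul {n : ℕ} (b f : (Fin n → ℝ) → ℝ) (x : Fin n → ℝ) :
    maximalFn (fun y => |b y| * f y) x = maximalFn (fun y => b y * f y) x :=
  maximalFn_congr_abs (fun y => by rw [abs_mul, abs_mul, abs_abs]) x

theorem abs_sub_self_eq_two_mul_max_neg_zero (a : ℝ) : |a| - a = 2 * max (-a) 0 := by
  rw [abs_sub_eq_two_nsmul_negPart, negPart_def, nsmul_eq_mul]
  rfl

theorem abs_commutator_sub_commutator_abs_le_general {n : ℕ} (b f : (Fin n → ℝ) → ℝ)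
    (x : Fin n → ℝ) :
    |(maximalFn (fun y => b y * f y) x - b x * maximalFn f x) -
        (maximalFn (fun y => |b y| * f y) x - |b x| * maximalFn f x)| ≤
      2 * max (-b x) 0 * maximalFn f x := by
  have hdiff : (maximalFn (fun y => b y * f y) x - b x * maximalFn f x) -
      (maximalFn (fun y => |b y| * f y) x - |b x| * maximalFn f x) =
        (|b x| - b x) * maximalFn f x := by
    rw [maximalFn_abs_mul]
    ring
  have hnonneg : 0 ≤ (|b x| - b x) * maximalFn f x :=
    mul_nonneg (sub_nonneg.2 (le_abs_self _)) (maximalFn_nonneg f x)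
  rw [hdiff, abs_of_nonneg hnonneg, abs_sub_self_eq_two_mul_max_neg_zero]

/-- `|[M,b]f(x) − [M,|b|]f(x)| ≤ 2 b⁻(x) Mf(x)`. -/
theorem abs_commutator_sub_commutator_abs_le {n : ℕ} (b f : (Fin n → ℝ) → ℝ)
    (hb : LocallyIntegrable b volume) (hf : LocallyIntegrable f volume)
    (x : Fin n → ℝ) :
    |(maximalFn (fun y => b y * f y) x - b x * maximalFn f x) -
        (maximalFn (fun y => |b y| * f y) x - |b x| * maximalFn f x)| ≤
      2 * max (-b x) 0 * maximalFn f x :=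
  abs_commutator_sub_commutator_abs_le_general b f x
end

section
/- Let b(y) = log|1+y| and f = χ_{(0,1)} on ℝ. Then for every x < 0, M(bf)(x) = (2 log 2 − 1)/(1 − x), where M is the Hardy–Littlewood maximal operator over intervals. -/
/-!
Write `A = ∫₀¹ h` for a nonnegative nondecreasing `h` on `[0, 1]` (here `h y = log (1 + y)`, with
`A = 2 log 2 - 1`). An interval `(s, t)` around `x ≤ 0` meets `(0, 1)` inside `(0, q]` with
`q = min t 1`, and is at least `q - x` long. Since a nondecreasing function has smaller means over
initial segments, `∫₀^q h ≤ q A`, so the average is at most `q A / (q - x) ≤ A / (1 - x)`. The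
intervals `(a, 1)` with `a ↑ x` show that this bound is the supremum.
-/

open MeasureTheory Metric Set Filter Topology

/-- The (uncentered) Hardy–Littlewood maximal function on `ℝ`, taken over
bounded open intervals (= metric balls of `ℝ`) containing the point. -/
noncomputable def maximalFn1 (f : ℝ → ℝ) (x : ℝ) : ℝ :=
  ⨆ I : {I : ℝ × ℝ // 0 < I.2 ∧ x ∈ ball I.1 I.2},
    ⨍ y in ball I.1.1 I.1.2, |f y|

lemma maximalFn1_le {f : ℝ → ℝ} {x M : ℝ}
    (hM : ∀ c r, 0 < r → x ∈ ball c r → ⨍ y in ball c r, |f y| ≤ M) :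
    maximalFn1 f x ≤ M :=
  haveI : Nonempty {I : ℝ × ℝ // 0 < I.2 ∧ x ∈ ball I.1 I.2} :=
    ⟨⟨(x, 1), one_pos, mem_ball_self one_pos⟩⟩
  ciSup_le fun I => hM _ _ I.2.1 I.2.2

lemma setAverage_le_maximalFn1 {f : ℝ → ℝ} {x M c r : ℝ}
    (hM : ∀ c r, 0 < r → x ∈ ball c r → ⨍ y in ball c r, |f y| ≤ M)
    (hr : 0 < r) (hxc : x ∈ ball c r) :
    ⨍ y in ball c r, |f y| ≤ maximalFn1 f x :=
  le_ciSup (f := fun I : {I : ℝ × ℝ // 0 < I.2 ∧ x ∈ ball I.1 I.2} =>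
      ⨍ y in ball I.1.1 I.1.2, |f y|)
    ⟨M, by rintro _ ⟨I, rfl⟩; exact hM _ _ I.2.1 I.2.2⟩ ⟨(c, r), hr, hxc⟩

lemma mul_intervalIntegral_le_of_monotoneOn {h : ℝ → ℝ} {a q b : ℝ}
    (hmono : MonotoneOn h (Icc a b)) (haq : a ≤ q) (hqb : q ≤ b) :
    (b - a) * ∫ y in a..q, h y ≤ (q - a) * ∫ y in a..b, h y := by
  have hint : ∀ {u v}, a ≤ u → u ≤ v → v ≤ b → IntervalIntegrable h volume u v :=
    fun hau huv hvb => (hmono.mono (by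
      rw [uIcc_of_le huv]; exact Icc_subset_Icc hau hvb)).intervalIntegrable
  have hleft : ∫ y in a..q, h y ≤ (q - a) * h q := by
    simpa using intervalIntegral.integral_mono_on haq (hint le_rfl haq hqb)
      intervalIntegrable_const fun y hy => hmono ⟨hy.1, hy.2.trans hqb⟩ ⟨haq, hqb⟩ hy.2
  have hright : (b - q) * h q ≤ ∫ y in q..b, h y := by
    simpa using intervalIntegral.integral_mono_on hqb intervalIntegrable_const
      (hint haq hqb le_rfl) fun y hy => hmono ⟨haq, hqb⟩ ⟨haq.trans hy.1, hy.2⟩ hy.1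
  rw [← intervalIntegral.integral_add_adjacent_intervals (hint le_rfl haq hqb)
    (hint haq hqb le_rfl)]
  nlinarith [mul_le_mul_of_nonneg_left hleft (sub_nonneg.2 hqb),
    mul_le_mul_of_nonneg_left hright (sub_nonneg.2 haq)]

section IndicatorUnitInterval

variable {h : ℝ → ℝ}

lemma setAverage_ball_abs_indicator_Ioo (hh : ∀ y ∈ Ioo 0 1, 0 ≤ h y) {c r : ℝ} (hr : 0 < r) :
    ⨍ y in ball c r, |indicator (Ioo 0 1) h y| = (∫ y in ball c r ∩ Ioo 0 1, h y) / (2 * r) := by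
  have habs : (fun y => |indicator (Ioo 0 1) h y|) = indicator (Ioo 0 1) h :=
    funext fun y => abs_of_nonneg (indicator_nonneg hh y)
  rw [show (fun y => |indicator (Ioo 0 1) h y|) = _ from habs, setAverage_eq, measureReal_def,
    Real.volume_ball, ENNReal.toReal_ofReal (by positivity),
    setIntegral_indicator measurableSet_Ioo, smul_eq_mul, inv_mul_eq_div]

lemma setAverage_ball_abs_indicator_Ioo_le (hmono : MonotoneOn h (Icc 0 1))
    (hh : ∀ y ∈ Icc 0 1, 0 ≤ h y) {x c r : ℝ} (hx : x ≤ 0) (hr : 0 < r) (hxc : x ∈ ball c r) :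
    ⨍ y in ball c r, |indicator (Ioo 0 1) h y| ≤ (∫ y in 0..1, h y) / (1 - x) := by
  set A := ∫ y in 0..1, h y
  have hA : 0 ≤ A := intervalIntegral.integral_nonneg zero_le_one hh
  rw [setAverage_ball_abs_indicator_Ioo (fun y hy => hh y (Ioo_subset_Icc_self hy)) hr]
  rw [Real.ball_eq_Ioo] at hxc ⊢
  set q := min (c + r) 1
  have hq1 : q ≤ 1 := min_le_right _ _
  have hsub : ∫ y in Ioo (c - r) (c + r) ∩ Ioo 0 1, h y ≤ ∫ y in Ioc 0 q, h y :=
    setIntegral_mono_set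
      ((hmono.integrableOn_isCompact isCompact_Icc).mono_set (Ioc_subset_Icc_self.trans
        (Icc_subset_Icc_right hq1)))
      (ae_restrict_of_forall_mem measurableSet_Ioc fun y hy => hh y ⟨hy.1.le, hy.2.trans hq1⟩)
      (Eventually.of_forall fun y hy => ⟨hy.2.1, le_min hy.1.2.le hy.2.2.le⟩)
  rcases le_or_gt q 0 with hq0 | hq0
  · rw [Ioc_eq_empty (not_lt.2 hq0), setIntegral_empty] at hsub
    have : 0 < 1 - x := by linarith
    exact (div_nonpos_of_nonpos_of_nonneg hsub (by positivity)).trans (by positivity)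
  have hmean : ∫ y in Ioc 0 q, h y ≤ q * A := by
    simpa [intervalIntegral.integral_of_le hq0.le] using
      mul_intervalIntegral_le_of_monotoneOn hmono hq0.le hq1
  have hlen : q - x ≤ 2 * r := by linarith [min_le_left (c + r) 1, hxc.1]
  calc (∫ y in Ioo (c - r) (c + r) ∩ Ioo 0 1, h y) / (2 * r)
      ≤ q * A / (q - x) := div_le_div₀ (by positivity) (hsub.trans hmean) (by linarith) hlen
    _ ≤ A / (1 - x) := by
      rw [div_le_div_iff₀ (by linarith) (by linarith)]
      nlinarith [mul_nonneg hA (mul_nonneg (neg_nonneg.2 hx) (sub_nonneg.2 hq1))]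

lemma setAverage_ball_abs_indicator_Ioo_of_nonpos (hh : ∀ y ∈ Ioo 0 1, 0 ≤ h y) {a : ℝ}
    (ha : a ≤ 0) :
    ⨍ y in ball ((a + 1) / 2) ((1 - a) / 2), |indicator (Ioo 0 1) h y|
      = (∫ y in 0..1, h y) / (1 - a) := by
  rw [setAverage_ball_abs_indicator_Ioo hh (by linarith), Real.ball_eq_Ioo,
    show (a + 1) / 2 - (1 - a) / 2 = a by ring, show (a + 1) / 2 + (1 - a) / 2 = 1 by ring,
    Ioo_inter_Ioo, max_eq_right ha, min_self, intervalIntegral.integral_of_le zero_le_one,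
    integral_Ioc_eq_integral_Ioo, show 2 * ((1 - a) / 2) = 1 - a by ring]

theorem maximalFn1_indicator_Ioo_of_monotoneOn (hmono : MonotoneOn h (Icc 0 1)) (h0 : 0 ≤ h 0)
    {x : ℝ} (hx : x ≤ 0) :
    maximalFn1 (indicator (Ioo 0 1) h) x = (∫ y in 0..1, h y) / (1 - x) := by
  have hh : ∀ y ∈ Icc 0 1, 0 ≤ h y := fun y hy =>
    h0.trans (hmono ⟨le_rfl, zero_le_one⟩ hy hy.1)
  have hbound := fun c r (hr : 0 < r) hxc =>
    setAverage_ball_abs_indicator_Ioo_le hmono hh hx (c := c) hr hxc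
  refine le_antisymm (maximalFn1_le hbound) ?_
  have hlim : Tendsto (fun a => (∫ y in 0..1, h y) / (1 - a)) (𝓝[<] x)
      (𝓝 ((∫ y in 0..1, h y) / (1 - x))) :=
    tendsto_nhdsWithin_of_tendsto_nhds
      (tendsto_const_nhds.div (tendsto_const_nhds.sub tendsto_id) (by linarith))
  refine le_of_tendsto hlim (eventually_nhdsWithin_of_forall fun a (ha : a < x) => ?_)
  rw [← setAverage_ball_abs_indicator_Ioo_of_nonpos (fun y hy => hh y (Ioo_subset_Icc_self hy))
    (ha.le.trans hx)]
  exact setAverage_le_maximalFn1 hbound (by linarith)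
    (by rw [Real.ball_eq_Ioo]; constructor <;> linarith)

end IndicatorUnitInterval

lemma monotoneOn_log_abs_one_add : MonotoneOn (fun y : ℝ => Real.log |1 + y|) (Icc 0 1) :=
  fun a ha b _ hab => by
    show Real.log |1 + a| ≤ Real.log |1 + b|
    rw [abs_of_pos (by linarith [ha.1]), abs_of_pos (by linarith [ha.1])]
    exact Real.log_le_log (by linarith [ha.1]) (by linarith)

lemma integral_log_abs_one_add : ∫ y in (0 : ℝ)..1, Real.log |1 + y| = 2 * Real.log 2 - 1 := by
  rw [intervalIntegral.integral_comp_add_left (fun u => Real.log |u|) 1]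
  simp only [Real.log_abs, integral_log]
  norm_num
  ring

/-- for `b(y) = log|1+y|`, `f = χ_{(0,1)}` and every `x < 0`,
`M(bf)(x) = (2 log 2 − 1)/(1 − x)`. -/
theorem maximalFn1_log_indicator (x : ℝ) (hx : x < 0) :
    maximalFn1 (Set.indicator (Set.Ioo 0 1) (fun y => Real.log |1 + y|)) x =
      (2 * Real.log 2 - 1) / (1 - x) := by
  rw [maximalFn1_indicator_Ioo_of_monotoneOn monotoneOn_log_abs_one_add (by simp) hx.le,
    integral_log_abs_one_add]
end

section
/- The commutator [M,b] with b(x) = log|1+x| is not of weak type (1,1): for f = χ_{(0,1)}, sup_{λ>0} λ·|{x ∈ ℝ : |[M,b]f(x)| > λ}| = ∞. -/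
/-!
Since `|log (1 + y)| ≤ y < 1` on `(0, 1)`, we have `|b f| ≤ f` and hence `M(b f) ≤ M f`,
while `M f(x) ≥ 1 / (2x)` for `x ≥ 1` (average over `(-x/2, 3x/2)`). Thus
`|[M,b] f(x)| ≥ (b(x) - 1) M f(x) ≥ (log x - 1) / (2x)` on `[1, ∞)`, and this function is not in
weak `L¹`: at height `λ = e^{-(2K+1)}` its level set contains `(e^{2K+1}, K e^{2K+1})`, so that
`λ · |{x : |[M,b] f(x)| > λ}| ≥ K - 1`.
-/

open MeasureTheory Metric

open Set

noncomputable def maximalCommutator (b f : ℝ → ℝ) (x : ℝ) : ℝ :=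
  maximalFn1 (fun y => b y * f y) x - b x * maximalFn1 f x

theorem MeasureTheory.setAverage_mono_of_nonneg {α : Type*} [MeasurableSpace α] {μ : Measure α}
    {s : Set α} {f g : α → ℝ} (hf : 0 ≤ f) (hg : IntegrableOn g s μ) (hfg : f ≤ g) :
    ⨍ y in s, f y ∂μ ≤ ⨍ y in s, g y ∂μ := by
  simp only [setAverage_eq, smul_eq_mul]
  exact mul_le_mul_of_nonneg_left
    (integral_mono_of_nonneg (.of_forall hf) hg (.of_forall hfg))
    (inv_nonneg.2 measureReal_nonneg)

theorem abs_indicator_one_le_one {α : Type*} (s : Set α) (y : α) :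
    |indicator s (1 : α → ℝ) y| ≤ 1 := by
  simpa using norm_indicator_le_norm_self (s := s) (f := (1 : α → ℝ)) (a := y)

instance (x : ℝ) : Nonempty {I : ℝ × ℝ // 0 < I.2 ∧ x ∈ ball I.1 I.2} :=
  ⟨⟨(x, 1), one_pos, mem_ball_self one_pos⟩⟩

variable {f g : ℝ → ℝ} {C : ℝ}

theorem setAverage_ball_abs_le (hf : ∀ y, |f y| ≤ C) (c r : ℝ) (hr : 0 < r) :
    ⨍ y in ball c r, |f y| ≤ C := by
  have hfin : volume (ball c r) ≠ ⊤ := measure_ball_lt_top.ne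
  calc ⨍ y in ball c r, |f y| ≤ ⨍ _ in ball c r, C :=
        setAverage_mono_of_nonneg (fun y => abs_nonneg (f y)) (integrableOn_const hfin) hf
    _ = C := setAverage_const (measure_ball_pos volume c hr).ne' hfin C

theorem le_maximalFn1 (hf : ∀ y, |f y| ≤ C) {x c r : ℝ} (hr : 0 < r) (hx : x ∈ ball c r) :
    ⨍ y in ball c r, |f y| ≤ maximalFn1 f x :=
  le_ciSup (f := fun I : {I : ℝ × ℝ // 0 < I.2 ∧ x ∈ ball I.1 I.2} =>
      ⨍ y in ball I.1.1 I.1.2, |f y|)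
    ⟨C, by rintro _ ⟨I, rfl⟩; exact setAverage_ball_abs_le hf _ _ I.2.1⟩
    ⟨(c, r), hr, hx⟩

theorem maximalFn1_mono (hf : AEStronglyMeasurable f) (hfC : ∀ y, |f y| ≤ C)
    (hgf : ∀ y, |g y| ≤ |f y|) (x : ℝ) : maximalFn1 g x ≤ maximalFn1 f x := by
  refine ciSup_le fun I => le_trans ?_ (le_maximalFn1 hfC I.2.1 I.2.2)
  refine setAverage_mono_of_nonneg (fun y => abs_nonneg (g y)) ?_ hgf
  exact Measure.integrableOn_of_bounded measure_ball_lt_top.ne hf.norm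
    (.of_forall fun y => by simpa using hfC y)

theorem inv_two_mul_le_maximalFn1_indicator_Ioo {x : ℝ} (hx : 1 ≤ x) :
    (2 * x)⁻¹ ≤ maximalFn1 (indicator (Ioo 0 1) 1) x := by
  have hx0 : 0 < x := by linarith
  have hball : ball (x / 2) x = Ioo (-(x / 2)) (3 * x / 2) := by
    rw [Real.ball_eq_Ioo]; ring_nf
  have hsub : Ioo (0 : ℝ) 1 ⊆ ball (x / 2) x := by
    rw [hball]; exact Ioo_subset_Ioo (by linarith) (by linarith)
  have hmem : x ∈ ball (x / 2) x := by rw [hball]; constructor <;> linarith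
  refine le_of_eq_of_le ?_ (le_maximalFn1 (abs_indicator_one_le_one _) hx0 hmem)
  have : (fun y => |indicator (Ioo (0 : ℝ) 1) (1 : ℝ → ℝ) y|) = indicator (Ioo 0 1) 1 := by
    ext y; exact abs_of_nonneg (indicator_nonneg (fun _ _ => zero_le_one) y)
  rw [this, setAverage_eq, setIntegral_indicator measurableSet_Ioo, inter_eq_right.2 hsub,
    Real.volume_real_ball hx0.le]
  simp

theorem abs_log_abs_one_add_mul_indicator_Ioo_le (y : ℝ) :
    |Real.log |1 + y| * indicator (Ioo 0 1) (1 : ℝ → ℝ) y| ≤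
      |indicator (Ioo 0 1) (1 : ℝ → ℝ) y| := by
  by_cases hy : y ∈ Ioo (0 : ℝ) 1
  · have hpos : (0 : ℝ) < 1 + y := by linarith [hy.1]
    have hlog_nonneg : 0 ≤ Real.log (1 + y) := Real.log_nonneg (by linarith [hy.1])
    have hlog_le : Real.log (1 + y) ≤ y := (Real.log_le_sub_one_of_pos hpos).trans_eq (by ring)
    rw [indicator_of_mem hy, Pi.one_apply, mul_one, abs_one, abs_of_pos hpos,
      abs_of_nonneg hlog_nonneg]
    linarith [hy.2]
  · simp [indicator_of_notMem hy]

theorem log_sub_one_div_le_abs_maximalCommutator {x : ℝ} (hx : 1 ≤ x) :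
    (Real.log x - 1) / (2 * x) ≤
      |maximalCommutator (fun y => Real.log |1 + y|) (indicator (Ioo 0 1) 1) x| := by
  rw [maximalCommutator, abs_sub_comm]
  set Mf := maximalFn1 (indicator (Ioo 0 1) 1) x
  set Mbf := maximalFn1 (fun y => Real.log |1 + y| * indicator (Ioo 0 1) (1 : ℝ → ℝ) y) x
  have hMbf : Mbf ≤ Mf :=
    maximalFn1_mono (measurable_one.indicator measurableSet_Ioo).aestronglyMeasurable
      (abs_indicator_one_le_one _) abs_log_abs_one_add_mul_indicator_Ioo_le x
  have hMf : (2 * x)⁻¹ ≤ Mf := inv_two_mul_le_maximalFn1_indicator_Ioo hx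
  have hb : Real.log x ≤ Real.log |1 + x| :=
    Real.log_le_log (by linarith) (by rw [abs_of_pos (by linarith)]; linarith)
  rcases le_or_gt (Real.log x) 1 with hlog | hlog
  · exact (div_nonpos_of_nonpos_of_nonneg (by linarith) (by linarith)).trans (abs_nonneg _)
  calc (Real.log x - 1) / (2 * x) = (Real.log x - 1) * (2 * x)⁻¹ := div_eq_mul_inv _ _
    _ ≤ (Real.log |1 + x| - 1) * Mf := by gcongr; linarith
    _ ≤ Real.log |1 + x| * Mf - Mbf := by linarith
    _ ≤ _ := le_abs_self _

theorem iSup_mul_volume_log_sub_one_div_eq_top :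
    (⨆ (l : ℝ) (_ : 0 < l), ENNReal.ofReal l *
      volume {x : ℝ | 1 ≤ x ∧ l < (Real.log x - 1) / (2 * x)}) = ⊤ := by
  rw [eq_top_iff, ← ENNReal.iSup_natCast]
  refine iSup_le fun n => ?_
  set K : ℝ := n + 1
  set A := Real.exp (2 * K + 1)
  have hK : 0 < K := by positivity
  have hA : 0 < A := Real.exp_pos _
  have hA1 : 1 ≤ A := Real.one_le_exp (by positivity)
  have hsub : Ioo A (K * A) ⊆ {x : ℝ | 1 ≤ x ∧ A⁻¹ < (Real.log x - 1) / (2 * x)} := by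
    rintro x ⟨hAx, hxK⟩
    have hx : 0 < x := hA.trans hAx
    have hlog : 2 * K + 1 < Real.log x := (Real.lt_log_iff_exp_lt hx).2 hAx
    refine ⟨by linarith, ?_⟩
    calc A⁻¹ = K / (K * A) := by field_simp
      _ < K / x := div_lt_div_of_pos_left (by positivity) hx hxK
      _ ≤ (Real.log x - 1) / (2 * x) := by
        rw [div_le_div_iff₀ hx (by positivity)]; nlinarith
  refine le_iSup₂_of_le A⁻¹ (inv_pos.2 hA) ?_
  calc (n : ENNReal) = ENNReal.ofReal (A⁻¹ * (K * A - A)) := by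
        rw [← ENNReal.ofReal_natCast]; congr 1; field_simp; ring
    _ = ENNReal.ofReal A⁻¹ * volume (Ioo A (K * A)) := by
        rw [Real.volume_Ioo, ENNReal.ofReal_mul (inv_nonneg.2 hA.le)]
    _ ≤ _ := by gcongr

/-- the commutator `[M,b]` with `b(x) = log|1+x|` is not of weak
type `(1,1)`: for `f = χ_{(0,1)}`,
`sup_{λ>0} λ · |{x : |[M,b]f(x)| > λ}| = ∞`. -/
theorem commutator_not_weak_type_one_one :
    (⨆ (l : ℝ) (_ : 0 < l),
      ENNReal.ofReal l *
        volume {x : ℝ |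
          l < |maximalFn1 (fun y =>
                  Real.log |1 + y| * Set.indicator (Set.Ioo 0 1) 1 y) x -
                Real.log |1 + x| *
                  maximalFn1 (Set.indicator (Set.Ioo 0 1) 1) x|}) = ⊤ := by
  refine top_unique (iSup_mul_volume_log_sub_one_div_eq_top.symm.trans_le ?_)
  refine iSup₂_mono fun l _ => mul_le_mul_right (measure_mono ?_) _
  rintro x ⟨hx, hlx⟩
  exact hlx.trans_le (log_sub_one_div_le_abs_maximalCommutator hx)
end

section
/- Let b ∈ BMO(ℝⁿ). Then there exists a constant C depending only on n such that for every cube Q and every t > 0, |{x ∈ Q : |b(x) − b_Q| > t}| ≤ C₁ |Q| exp(−C₂ t / ‖b‖_*) (the John–Nirenberg inequality), where ‖b‖_* = sup_Q (1/|Q|)∫_Q |b − b_Q|. -/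
/-!
Calderón–Zygmund stopping time on dyadic subcubes. Fix a cube `Q` and let `g = |b - b_Q|`, whose
average over `Q` is at most `B`. The maximal dyadic subcubes of `Q` on which `g` has average
greater than `2B` are disjoint, so their total volume is at most `|Q| / 2`; the parent of each of
them has `g`-average at most `2B`, so `|b_{Q'} - b_Q| ≤ 2ⁿ · 2B`; and by Lebesgue differentiation
they cover almost every point of `Q` where `g > 2B`. Hence, with `K = 2ⁿ⁺¹ B`, the part of `Q`
where `|b - b_Q| > (k + 1) K` is covered a.e. by the parts of these subcubes `Q'` where
`|b - b_{Q'}| > k K`, and induction on `k` bounds its volume by `2⁻ᵏ |Q|`.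
-/

open MeasureTheory Metric Set Filter Topology ENNReal

section SetAverage

variable {α : Type*} [MeasurableSpace α] {μ : Measure α} {s t : Set α} {f : α → ℝ}

theorem lintegral_ofReal_eq_ofReal_setAverage_mul (hs : μ s ≠ ∞) (hf : IntegrableOn f s μ)
    (hf₀ : 0 ≤ᵐ[μ.restrict s] f) :
    ∫⁻ x in s, ENNReal.ofReal (f x) ∂μ = ENNReal.ofReal (⨍ x in s, f x ∂μ) * μ s := by
  rcases eq_or_ne (μ s) 0 with hs₀ | hs₀
  · simp [Measure.restrict_eq_zero.mpr hs₀, hs₀]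
  · rw [ofReal_setAverage hf hf₀, ENNReal.div_mul_cancel hs₀ hs]

theorem abs_setAverage_sub_le (hs₀ : μ s ≠ 0) (hs : μ s ≠ ∞) (hf : IntegrableOn f s μ) (A : ℝ) :
    |(⨍ x in s, f x ∂μ) - A| ≤ ⨍ x in s, |f x - A| ∂μ := by
  have hμ : 0 < μ.real s := ENNReal.toReal_pos hs₀ hs
  have hfA : ∫ x in s, (f x - A) ∂μ = μ.real s * ((⨍ x in s, f x ∂μ) - A) := by
    rw [integral_sub hf (integrableOn_const hs), setIntegral_const, ← measure_smul_setAverage f hs,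
      smul_eq_mul, smul_eq_mul, mul_sub]
  calc |(⨍ x in s, f x ∂μ) - A| = (μ.real s)⁻¹ * |∫ x in s, (f x - A) ∂μ| := by
        rw [hfA, abs_mul, abs_of_pos hμ, inv_mul_cancel_left₀ hμ.ne']
    _ ≤ (μ.real s)⁻¹ * ∫ x in s, |f x - A| ∂μ := by gcongr; exact abs_integral_le_integral_abs
    _ = ⨍ x in s, |f x - A| ∂μ := by rw [setAverage_eq, smul_eq_mul]

theorem setAverage_le_mul_setAverage_of_subset {K : ℝ} (hst : s ⊆ t) (hK : μ.real t = K * μ.real s)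
    (hs₀ : μ s ≠ 0) (ht : μ t ≠ ∞) (hf : IntegrableOn f t μ) (hf₀ : ∀ x, 0 ≤ f x) :
    ⨍ x in s, f x ∂μ ≤ K * ⨍ x in t, f x ∂μ := by
  have hs : μ s ≠ ∞ := ne_top_of_le_ne_top ht (measure_mono hst)
  have hμ : 0 < μ.real s := ENNReal.toReal_pos hs₀ hs
  have hint : ∫ x in s, f x ∂μ ≤ ∫ x in t, f x ∂μ :=
    setIntegral_mono_set hf (Eventually.of_forall hf₀) hst.eventuallyLE
  rw [← mul_le_mul_iff_right₀ hμ, ← smul_eq_mul, measure_smul_setAverage f hs, ← mul_assoc,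
    mul_comm _ K, ← hK, ← smul_eq_mul, measure_smul_setAverage f ht]
  exact hint

theorem tsum_measure_le_of_lt_setAverage {ι : Type*} {S : Set ι} {u : ι → Set α}
    (hS : S.Countable) (hum : ∀ i ∈ S, MeasurableSet (u i)) (hdisj : S.PairwiseDisjoint u)
    (hus : ∀ i ∈ S, u i ⊆ s) (hs : μ s ≠ ∞) (hf : IntegrableOn f s μ) (hf₀ : ∀ x, 0 ≤ f x)
    {a B : ℝ} (hfu : ∀ i ∈ S, a < ⨍ x in u i, f x ∂μ) (hfs : ⨍ x in s, f x ∂μ ≤ B) :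
    ENNReal.ofReal a * ∑' i : S, μ (u i) ≤ ENNReal.ofReal B * μ s := by
  have hnn : ∀ t, 0 ≤ᵐ[μ.restrict t] f := fun t => Eventually.of_forall hf₀
  calc ENNReal.ofReal a * ∑' i : S, μ (u i)
      = ∑' i : S, ENNReal.ofReal a * μ (u i) := ENNReal.tsum_mul_left.symm
    _ ≤ ∑' i : S, ∫⁻ x in u i, ENNReal.ofReal (f x) ∂μ := by
      refine ENNReal.tsum_le_tsum fun ⟨i, hi⟩ => ?_
      have hu : μ (u i) ≠ ∞ := ne_top_of_le_ne_top hs (measure_mono (hus i hi))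
      rw [lintegral_ofReal_eq_ofReal_setAverage_mul hu (hf.mono_set (hus i hi)) (hnn _)]
      gcongr
      exact (hfu i hi).le
    _ = ∫⁻ x in ⋃ i ∈ S, u i, ENNReal.ofReal (f x) ∂μ := (lintegral_biUnion hS hum hdisj _).symm
    _ ≤ ∫⁻ x in s, ENNReal.ofReal (f x) ∂μ := lintegral_mono_set (iUnion₂_subset hus)
    _ ≤ ENNReal.ofReal B * μ s := by
      rw [lintegral_ofReal_eq_ofReal_setAverage_mul hs hf (hnn _)]
      gcongr

end SetAverage

def minimalPrefixes {α : Type*} (P : List α → Prop) : Set (List α) :=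
  {l | P l ∧ ∀ m, m <+: l → P m → m = l}

theorem exists_prefix_mem_minimalPrefixes {α : Type*} {P : List α → Prop} {l : List α}
    (h : P l) : ∃ m, m <+: l ∧ m ∈ minimalPrefixes P := by
  obtain ⟨m, ⟨hml, hm⟩, hmin⟩ :=
    (measure List.length).wf.has_min {m | m <+: l ∧ P m} ⟨l, List.prefix_refl l, h⟩
  refine ⟨m, hml, hm, fun m' hm' hPm' => hm'.eq_of_length ?_⟩
  exact le_antisymm hm'.length_le (not_lt.mp (hmin m' ⟨hm'.trans hml, hPm'⟩))

theorem inv_two_pow_floor_le (u : ℝ) :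
    (2⁻¹ : ℝ) ^ ⌊u⌋₊ ≤ 2 * Real.exp (-Real.log 2 * u) := by
  have hlog := Real.log_pos one_lt_two
  have hu' := Nat.lt_floor_add_one u
  calc (2⁻¹ : ℝ) ^ ⌊u⌋₊ = Real.exp (⌊u⌋₊ * Real.log 2⁻¹) := by
        rw [Real.exp_nat_mul, Real.exp_log (by norm_num)]
    _ ≤ Real.exp (Real.log 2 + -Real.log 2 * u) := by
        rw [Real.exp_le_exp, Real.log_inv]
        nlinarith
    _ = 2 * Real.exp (-Real.log 2 * u) := by rw [Real.exp_add, Real.exp_log two_pos]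

structure Cube (n : ℕ) where
  center : Fin n → ℝ
  radius : ℝ
  radius_pos : 0 < radius

noncomputable section

namespace Cube

variable {n : ℕ} (Q : Cube n) {x : Fin n → ℝ}

def toSet : Set (Fin n → ℝ) := ball Q.center Q.radius

def child (s : Fin n → Bool) : Cube n where
  center i := Q.center i + if s i then Q.radius / 2 else -(Q.radius / 2)
  radius := Q.radius / 2
  radius_pos := half_pos Q.radius_pos

def descendant (l : List (Fin n → Bool)) : Cube n := l.foldl child Q

@[simp] lemma descendant_nil : Q.descendant [] = Q := rfl

lemma descendant_cons (s : Fin n → Bool) (l : List (Fin n → Bool)) :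
    Q.descendant (s :: l) = (Q.child s).descendant l := rfl

lemma descendant_append (l₁ l₂ : List (Fin n → Bool)) :
    Q.descendant (l₁ ++ l₂) = (Q.descendant l₁).descendant l₂ := List.foldl_append

lemma radius_descendant (l : List (Fin n → Bool)) :
    (Q.descendant l).radius = Q.radius / 2 ^ l.length := by
  induction l generalizing Q with
  | nil => simp
  | cons s l ih =>
    rw [descendant_cons, ih, List.length_cons, pow_succ, mul_comm, ← div_div]
    rfl

lemma mem_toSet : x ∈ Q.toSet ↔ ∀ i, |x i - Q.center i| < Q.radius := by
  simp only [toSet, mem_ball, dist_pi_lt_iff Q.radius_pos, Real.dist_eq]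

lemma mem_child_toSet {s : Fin n → Bool} :
    x ∈ (Q.child s).toSet ↔ ∀ i, if s i then Q.center i < x i ∧ x i < Q.center i + Q.radius
      else Q.center i - Q.radius < x i ∧ x i < Q.center i := by
  rw [mem_toSet]
  refine forall_congr' fun i => ?_
  simp only [child, abs_lt]
  split_ifs <;> constructor <;> rintro ⟨h₁, h₂⟩ <;> constructor <;> linarith

lemma child_subset (s : Fin n → Bool) : (Q.child s).toSet ⊆ Q.toSet := by
  intro x hx
  rw [mem_child_toSet] at hx
  refine Q.mem_toSet.mpr fun i => abs_lt.mpr ?_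
  have := hx i
  split_ifs at this <;> constructor <;> linarith [Q.radius_pos]

lemma descendant_subset (l : List (Fin n → Bool)) : (Q.descendant l).toSet ⊆ Q.toSet := by
  induction l generalizing Q with
  | nil => rfl
  | cons s l ih => exact (ih _).trans (Q.child_subset s)

lemma descendant_subset_of_prefix {l m : List (Fin n → Bool)} (h : m <+: l) :
    (Q.descendant l).toSet ⊆ (Q.descendant m).toSet := by
  obtain ⟨t, rfl⟩ := h
  rw [descendant_append]
  exact descendant_subset _ t

lemma disjoint_child {s s' : Fin n → Bool} (h : s ≠ s') :
    Disjoint (Q.child s).toSet (Q.child s').toSet := by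
  obtain ⟨i, hi⟩ := Function.ne_iff.mp h
  refine Set.disjoint_left.mpr fun x hx hx' => ?_
  have h₁ := Q.mem_child_toSet.mp hx i
  have h₂ := Q.mem_child_toSet.mp hx' i
  cases hs : s i <;> cases hs' : s' i <;> simp only [hs, hs'] at hi h₁ h₂ <;>
    first | exact hi rfl | simp at h₁ h₂; linarith

lemma prefix_or_prefix_of_not_disjoint {l l' : List (Fin n → Bool)}
    (h : ¬Disjoint (Q.descendant l).toSet (Q.descendant l').toSet) : l <+: l' ∨ l' <+: l := by
  induction l generalizing Q l' with
  | nil => exact Or.inl List.nil_prefix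
  | cons s t ih =>
    cases l' with
    | nil => exact Or.inr List.nil_prefix
    | cons s' t' =>
      obtain rfl : s = s' := by
        by_contra hss
        exact h ((Q.disjoint_child hss).mono (descendant_subset _ t) (descendant_subset _ t'))
      simpa only [List.cons_prefix_cons, true_and] using ih _ h

lemma volume_toSet : volume Q.toSet = ENNReal.ofReal ((2 * Q.radius) ^ n) := by
  rw [toSet, Real.volume_pi_ball _ Q.radius_pos, Fintype.card_fin]

lemma measurableSet_toSet : MeasurableSet Q.toSet := measurableSet_ball

lemma volume_toSet_ne_zero : volume Q.toSet ≠ 0 := (measure_ball_pos _ _ Q.radius_pos).ne'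

lemma volume_toSet_ne_top : volume Q.toSet ≠ ∞ := measure_ball_lt_top.ne

lemma measureReal_toSet_eq_two_pow_mul_child (s : Fin n → Bool) :
    volume.real Q.toSet = 2 ^ n * volume.real (Q.child s).toSet := by
  have h : (2 * Q.radius) ^ n = 2 ^ n * (2 * (Q.child s).radius) ^ n := by
    rw [← mul_pow]; congr 1; simp only [child]; ring
  have h₁ := Q.radius_pos
  have h₂ := (Q.child s).radius_pos
  rw [measureReal_def, measureReal_def, volume_toSet, volume_toSet,
    ENNReal.toReal_ofReal (by positivity), ENNReal.toReal_ofReal (by positivity), h]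

lemma toSet_ae_eq_closedBall : Q.toSet =ᵐ[volume] closedBall Q.center Q.radius := by
  refine ae_eq_set.mpr ⟨by simp [toSet, sdiff_eq_empty.mpr ball_subset_closedBall], ?_⟩
  rw [toSet, closedBall_sdiff_ball]
  exact Measure.addHaar_sphere_of_ne_zero _ _ Q.radius_pos.ne'

def childIndex (x : Fin n → ℝ) : Fin n → Bool := fun i => decide (Q.center i < x i)

lemma mem_child_childIndex (hx : x ∈ Q.toSet) (hne : ∀ i, x i ≠ Q.center i) :
    x ∈ (Q.child (Q.childIndex x)).toSet := by
  rw [mem_child_toSet]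
  intro i
  have := abs_lt.mp (Q.mem_toSet.mp hx i)
  by_cases h : Q.center i < x i
  · rw [if_pos (show Q.childIndex x i = true from decide_eq_true h)]
    exact ⟨h, by linarith⟩
  · rw [if_neg (show Q.childIndex x i ≠ true by simpa [childIndex] using h)]
    constructor <;> [linarith; exact lt_of_le_of_ne (not_lt.mp h) (hne i)]

/-- The address of the generation-`k` dyadic subcube of `Q` containing `x`, if `x` lies on no
dyadic hyperplane. -/
def address (x : Fin n → ℝ) : ℕ → List (Fin n → Bool)
  | 0 => []
  | k + 1 => address x k ++ [(Q.descendant (address x k)).childIndex x]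

lemma length_address (x : Fin n → ℝ) (k : ℕ) : (Q.address x k).length = k := by
  induction k with
  | zero => rfl
  | succ k ih => simp [address, ih]

lemma mem_descendant_address (hx : x ∈ Q.toSet)
    (hne : ∀ l i, x i ≠ (Q.descendant l).center i) (k : ℕ) :
    x ∈ (Q.descendant (Q.address x k)).toSet := by
  induction k with
  | zero => exact hx
  | succ k ih =>
    rw [address, descendant_append]
    exact mem_child_childIndex _ ih (hne _)

variable {b g : (Fin n → ℝ) → ℝ}

lemma integrableOn_toSet (hb : LocallyIntegrable b volume) : IntegrableOn b Q.toSet :=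
  (hb.integrableOn_isCompact (isCompact_closedBall _ _)).mono_set ball_subset_closedBall

lemma integrableOn_abs_sub (hb : LocallyIntegrable b volume) (A : ℝ) :
    IntegrableOn (fun y => |b y - A|) Q.toSet :=
  ((Q.integrableOn_toSet hb).sub (integrableOn_const Q.volume_toSet_ne_top)).abs

theorem ae_tendsto_setAverage_descendant_address (hb : LocallyIntegrable b volume) :
    ∀ᵐ x, x ∈ Q.toSet → (∀ k, x ∈ (Q.descendant (Q.address x k)).toSet) ∧
      Tendsto (fun k => ⨍ y in (Q.descendant (Q.address x k)).toSet, b y) atTop (𝓝 (b x)) := by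
  have hne : ∀ᵐ x : Fin n → ℝ, ∀ l i, x i ≠ (Q.descendant l).center i :=
    ae_all_iff.mpr fun l => ae_all_iff.mpr fun i => Measure.ae_eval_ne _ i _
  filter_upwards [hne, IsUnifLocDoublingMeasure.ae_tendsto_average volume hb 1]
    with x hne hlim hx
  have hmem := Q.mem_descendant_address hx hne
  refine ⟨hmem, ?_⟩
  have hrad : ∀ k, (Q.descendant (Q.address x k)).radius = Q.radius / 2 ^ k := fun k => by
    rw [radius_descendant, length_address]
  have hδ : Tendsto (fun k => (Q.descendant (Q.address x k)).radius) atTop (𝓝[>] 0) := by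
    refine tendsto_nhdsWithin_iff.mpr ⟨?_, Eventually.of_forall fun k => radius_pos _⟩
    simp only [hrad]
    exact tendsto_const_nhds.div_atTop (tendsto_pow_atTop_atTop_of_one_lt one_lt_two)
  have := hlim (fun k => (Q.descendant (Q.address x k)).center) _ hδ
    (Eventually.of_forall fun k => by rw [one_mul]; exact ball_subset_closedBall (hmem k))
  simpa only [setAverage_congr (toSet_ae_eq_closedBall _)] using this

/-- Addresses of the maximal dyadic subcubes of `Q` on which the average of `g` exceeds `a`. -/
def stoppingAddresses (g : (Fin n → ℝ) → ℝ) (a : ℝ) : Set (List (Fin n → Bool)) :=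
  minimalPrefixes fun l => a < ⨍ y in (Q.descendant l).toSet, g y

variable {Q}

lemma pairwiseDisjoint_stoppingAddresses (a : ℝ) :
    (Q.stoppingAddresses g a).PairwiseDisjoint fun l => (Q.descendant l).toSet := by
  intro l hl l' hl' hne
  by_contra h
  rcases Q.prefix_or_prefix_of_not_disjoint h with h' | h'
  · exact hne (hl'.2 l h' hl.1)
  · exact hne (hl.2 l' h' hl'.1).symm

lemma ae_mem_biUnion_stoppingAddresses (hb : LocallyIntegrable b volume) (A a : ℝ) :
    ∀ᵐ x, x ∈ Q.toSet → a < |b x - A| →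
      x ∈ ⋃ l ∈ Q.stoppingAddresses (fun y => |b y - A|) a, (Q.descendant l).toSet := by
  filter_upwards [Q.ae_tendsto_setAverage_descendant_address hb] with x hx hxQ hxa
  obtain ⟨hmem, hlim⟩ := hx hxQ
  obtain ⟨k, hk⟩ := (((continuous_abs.tendsto _).comp (hlim.sub_const A)).eventually
    (lt_mem_nhds hxa)).exists
  have hk' : a < ⨍ y in (Q.descendant (Q.address x k)).toSet, |b y - A| :=
    hk.trans_le (abs_setAverage_sub_le (volume_toSet_ne_zero _) (volume_toSet_ne_top _)
      (integrableOn_toSet _ hb) A)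
  obtain ⟨m, hm, hmS⟩ := exists_prefix_mem_minimalPrefixes
    (P := fun l => a < ⨍ y in (Q.descendant l).toSet, |b y - A|) hk'
  exact mem_biUnion hmS (Q.descendant_subset_of_prefix hm (hmem k))

lemma setAverage_le_of_mem_stoppingAddresses {a : ℝ} {l : List (Fin n → Bool)}
    (hg : IntegrableOn g Q.toSet) (hg₀ : ∀ x, 0 ≤ g x) (hQ : ⨍ y in Q.toSet, g y ≤ a)
    (hl : l ∈ Q.stoppingAddresses g a) :
    ⨍ y in (Q.descendant l).toSet, g y ≤ 2 ^ n * a := by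
  rcases l.eq_nil_or_concat' with rfl | ⟨m, s, rfl⟩
  · exact absurd hl.1 (not_lt.mpr hQ)
  have hm : ⨍ y in (Q.descendant m).toSet, g y ≤ a :=
    not_lt.mp fun h => by simpa using hl.2 m (List.prefix_append _ _) h
  rw [descendant_append]
  calc ⨍ y in ((Q.descendant m).child s).toSet, g y
      ≤ 2 ^ n * ⨍ y in (Q.descendant m).toSet, g y :=
        setAverage_le_mul_setAverage_of_subset (child_subset _ s)
          (measureReal_toSet_eq_two_pow_mul_child _ s) (volume_toSet_ne_zero _)
          (volume_toSet_ne_top _) (hg.mono_set (descendant_subset _ _)) hg₀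
    _ ≤ 2 ^ n * a := by gcongr

section Oscillation

variable {B : ℝ} (hb : LocallyIntegrable b volume) (hB : 0 < B)
  (hQ : ⨍ y in Q.toSet, |b y - ⨍ z in Q.toSet, b z| ≤ B)
include hb hB hQ

theorem tsum_volume_stoppingAddresses_le_half :
    ∑' l : Q.stoppingAddresses (fun y => |b y - ⨍ z in Q.toSet, b z|) (2 * B),
      volume (Q.descendant l).toSet ≤ 2⁻¹ * volume Q.toSet := by
  have h := tsum_measure_le_of_lt_setAverage (Set.to_countable _)
    (fun l _ => measurableSet_toSet _) (pairwiseDisjoint_stoppingAddresses _)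
    (fun l _ => descendant_subset _ _) Q.volume_toSet_ne_top (Q.integrableOn_abs_sub hb _)
    (fun _ => abs_nonneg _) (a := 2 * B) (fun l hl => hl.1) hQ
  rw [ENNReal.ofReal_mul zero_le_two, ENNReal.ofReal_ofNat, mul_comm 2, mul_assoc,
    ENNReal.mul_le_mul_iff_right (ENNReal.ofReal_pos.mpr hB).ne' ENNReal.ofReal_ne_top] at h
  rw [← ENNReal.div_eq_inv_mul, ENNReal.le_div_iff_mul_le (by simp) (by simp), mul_comm]
  exact h

theorem abs_setAverage_descendant_sub_le {l : List (Fin n → Bool)}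
    (hl : l ∈ Q.stoppingAddresses (fun y => |b y - ⨍ z in Q.toSet, b z|) (2 * B)) :
    |(⨍ y in (Q.descendant l).toSet, b y) - ⨍ y in Q.toSet, b y| ≤ 2 ^ (n + 1) * B := by
  calc |(⨍ y in (Q.descendant l).toSet, b y) - ⨍ y in Q.toSet, b y|
      ≤ ⨍ y in (Q.descendant l).toSet, |b y - ⨍ z in Q.toSet, b z| :=
        abs_setAverage_sub_le (volume_toSet_ne_zero _) (volume_toSet_ne_top _)
          (integrableOn_toSet _ hb) _
    _ ≤ 2 ^ n * (2 * B) :=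
        setAverage_le_of_mem_stoppingAddresses (Q.integrableOn_abs_sub hb _)
          (fun _ => abs_nonneg _) (by linarith) hl
    _ = 2 ^ (n + 1) * B := by ring

end Oscillation

section Decay

variable {B : ℝ}

theorem volume_lt_abs_sub_setAverage_le_inv_two_pow (hb : LocallyIntegrable b volume)
    (hB : 0 < B) (hbmo : ∀ Q : Cube n, ⨍ y in Q.toSet, |b y - ⨍ z in Q.toSet, b z| ≤ B)
    (k : ℕ) (Q : Cube n) :
    volume {x ∈ Q.toSet | k * (2 ^ (n + 1) * B) < |b x - ⨍ y in Q.toSet, b y|} ≤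
      2⁻¹ ^ k * volume Q.toSet := by
  induction k generalizing Q with
  | zero => simpa using measure_mono (sep_subset Q.toSet _)
  | succ k ih =>
    set A := ⨍ y in Q.toSet, b y
    set S := Q.stoppingAddresses (fun y => |b y - A|) (2 * B)
    have hB2 : 2 * B ≤ (k + 1 : ℕ) * (2 ^ (n + 1) * B) :=
      (mul_le_mul_of_nonneg_right (le_self_pow₀ one_le_two n.succ_ne_zero) hB.le).trans
        (le_mul_of_one_le_left (by positivity) (by simp))
    have hcover : {x ∈ Q.toSet | (k + 1 : ℕ) * (2 ^ (n + 1) * B) < |b x - A|} ≤ᵐ[volume]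
        ⋃ l ∈ S, {x ∈ (Q.descendant l).toSet |
          k * (2 ^ (n + 1) * B) < |b x - ⨍ y in (Q.descendant l).toSet, b y|} := by
      filter_upwards [ae_mem_biUnion_stoppingAddresses hb A (2 * B)] with x hx ⟨hxQ, hxk⟩
      obtain ⟨l, hl, hxl⟩ := mem_iUnion₂.mp (hx hxQ (hB2.trans_lt hxk))
      refine mem_iUnion₂.mpr ⟨l, hl, hxl, ?_⟩
      have hdev := abs_setAverage_descendant_sub_le hb hB (hbmo Q) hl
      have htri := abs_sub_le (b x) (⨍ y in (Q.descendant l).toSet, b y) A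
      push_cast at hxk
      linarith
    calc volume {x ∈ Q.toSet | (k + 1 : ℕ) * (2 ^ (n + 1) * B) < |b x - A|}
        ≤ volume (⋃ l ∈ S, {x ∈ (Q.descendant l).toSet |
          k * (2 ^ (n + 1) * B) < |b x - ⨍ y in (Q.descendant l).toSet, b y|}) :=
          measure_mono_ae hcover
      _ ≤ ∑' l : S, volume {x ∈ (Q.descendant l).toSet |
          k * (2 ^ (n + 1) * B) < |b x - ⨍ y in (Q.descendant l).toSet, b y|} :=
          measure_biUnion_le _ S.to_countable _
      _ ≤ ∑' l : S, 2⁻¹ ^ k * volume (Q.descendant l).toSet :=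
          ENNReal.tsum_le_tsum fun l => ih _
      _ = 2⁻¹ ^ k * ∑' l : S, volume (Q.descendant l).toSet := ENNReal.tsum_mul_left
      _ ≤ 2⁻¹ ^ k * (2⁻¹ * volume Q.toSet) := by
          gcongr
          exact tsum_volume_stoppingAddresses_le_half hb hB (hbmo Q)
      _ = 2⁻¹ ^ (k + 1) * volume Q.toSet := by rw [pow_succ, mul_assoc]

theorem volume_lt_abs_sub_setAverage_le_exp (hb : LocallyIntegrable b volume)
    (hB : 0 < B) (hbmo : ∀ Q : Cube n, ⨍ y in Q.toSet, |b y - ⨍ z in Q.toSet, b z| ≤ B)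
    (Q : Cube n) {t : ℝ} (ht : 0 ≤ t) :
    volume {x ∈ Q.toSet | t < |b x - ⨍ y in Q.toSet, b y|} ≤
      ENNReal.ofReal (2 * Real.exp (-Real.log 2 * (t / (2 ^ (n + 1) * B)))) * volume Q.toSet := by
  have hK : 0 < 2 ^ (n + 1) * B := by positivity
  have hfloor : ⌊t / (2 ^ (n + 1) * B)⌋₊ * (2 ^ (n + 1) * B) ≤ t :=
    (le_div_iff₀ hK).mp (Nat.floor_le (by positivity))
  calc volume {x ∈ Q.toSet | t < |b x - ⨍ y in Q.toSet, b y|}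
      ≤ volume {x ∈ Q.toSet | ⌊t / (2 ^ (n + 1) * B)⌋₊ * (2 ^ (n + 1) * B) <
          |b x - ⨍ y in Q.toSet, b y|} :=
        measure_mono fun x hx => ⟨hx.1, hfloor.trans_lt hx.2⟩
    _ ≤ 2⁻¹ ^ ⌊t / (2 ^ (n + 1) * B)⌋₊ * volume Q.toSet :=
        volume_lt_abs_sub_setAverage_le_inv_two_pow hb hB hbmo _ Q
    _ = ENNReal.ofReal (2⁻¹ ^ ⌊t / (2 ^ (n + 1) * B)⌋₊) * volume Q.toSet := by
        rw [ENNReal.ofReal_pow (by norm_num), ENNReal.ofReal_inv_of_pos two_pos,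
          ENNReal.ofReal_ofNat]
    _ ≤ _ := by
        gcongr
        exact inv_two_pow_floor_le _

end Decay

end Cube

end

/-- John–Nirenberg: there are constants `C₁, C₂ > 0` depending
only on the dimension such that for every `b ∈ BMO(ℝⁿ)` (with BMO seminorm at
most `B`), every cube `Q` (a sup-norm ball of `ℝⁿ`) and every `t > 0`,
`|{x ∈ Q : |b(x) − b_Q| > t}| ≤ C₁ |Q| exp(−C₂ t / B)`. -/
theorem john_nirenberg (n : ℕ) :
    ∃ C₁ C₂ : ℝ, 0 < C₁ ∧ 0 < C₂ ∧
      ∀ (b : (Fin n → ℝ) → ℝ) (B : ℝ), LocallyIntegrable b volume → 0 < B →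
        (∀ (c : Fin n → ℝ) (r : ℝ), 0 < r →
          ⨍ x in ball c r, |b x - ⨍ y in ball c r, b y| ≤ B) →
        ∀ (c : Fin n → ℝ) (r t : ℝ), 0 < r → 0 < t →
          volume {x ∈ ball c r | t < |b x - ⨍ y in ball c r, b y|} ≤
            ENNReal.ofReal (C₁ * (volume (ball c r)).toReal *
              Real.exp (-C₂ * t / B)) := by
  refine ⟨2, Real.log 2 / 2 ^ (n + 1), two_pos, by positivity, ?_⟩
  intro b B hb hB hbmo c r t hr ht
  have hexp : -(Real.log 2 / 2 ^ (n + 1)) * t / B = -Real.log 2 * (t / (2 ^ (n + 1) * B)) := by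
    field_simp
  have h := Cube.volume_lt_abs_sub_setAverage_le_exp hb hB
    (fun Q => hbmo Q.center Q.radius Q.radius_pos) ⟨c, r, hr⟩ ht.le
  rwa [← hexp, ← ENNReal.ofReal_toReal (Cube.volume_toSet_ne_top _),
    ← ENNReal.ofReal_mul (by positivity), mul_right_comm] at h
end

section
/- Suppose b is locally integrable on ℝⁿ and there exists C > 0 such that for all λ > 0 and all f ∈ L(1+log⁺L), |{x : C_b(f)(x) > λ}| ≤ C ∫ (|f|/λ)(1 + log⁺(|f|/λ)). Then b ∈ BMO(ℝⁿ). -/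
/-!
Test the weak-type inequality on `f = 1_Q` for a cube `Q`. Comparing `b` with the constant
`b x` gives, for every `x ∈ Q`, `⨍_Q |b - b_Q| ≤ 2 ⨍_Q |b x - b y| dy ≤ 2 C_b(1_Q)(x)`. So if the
mean oscillation on `Q` exceeded `2 (C + 1)`, almost all of `Q` would lie in
`{C_b(1_Q) > C + 1}`, whose measure the hypothesis bounds by `C |Q| / (C + 1) < |Q|`.
The only analytic input is that the supremum defining `C_b(1_Q)(x)` is finite for a.e. `x`:
small cubes are handled by the Lebesgue differentiation theorem, large ones by integrability.
-/

open MeasureTheory Metric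

section Average

open ProbabilityTheory

variable {α : Type*} [MeasurableSpace α] {μ : Measure α} {s : Set α}

lemma setAverage_eq_integral_cond (f : α → ℝ) : ⨍ y in s, f y ∂μ = ∫ y, f y ∂μ[|s] := by
  rw [average_eq', Measure.restrict_apply_univ]
  rfl

lemma MeasureTheory.IntegrableOn.integrable_cond {f : α → ℝ} (hf : IntegrableOn f s μ)
    (hs0 : μ s ≠ 0) : Integrable f μ[|s] :=
  hf.smul_measure (ENNReal.inv_ne_top.2 hs0)

lemma integral_abs_sub_integral_le [IsProbabilityMeasure μ] {b : α → ℝ} (hb : Integrable b μ)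
    (a : ℝ) : ∫ y, |b y - ∫ z, b z ∂μ| ∂μ ≤ 2 * ∫ y, |a - b y| ∂μ := by
  set m := ∫ z, b z ∂μ
  have hdev : |a - m| ≤ ∫ y, |a - b y| ∂μ := by
    calc |a - m| = |∫ y, (a - b y) ∂μ| := by simp [integral_sub (integrable_const a) hb, m]
      _ ≤ ∫ y, |a - b y| ∂μ := abs_integral_le_integral_abs
  have hab : Integrable (fun y => |a - b y|) μ := ((integrable_const a).sub hb).abs
  have htri : ∫ y, |b y - m| ∂μ ≤ ∫ y, (|a - b y| + |a - m|) ∂μ :=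
    integral_mono (hb.sub (integrable_const m)).abs (hab.add (integrable_const _))
      fun y => by simpa only [abs_sub_comm (b y) a] using abs_sub_le (b y) a m
  rw [integral_add hab (integrable_const _)] at htri
  simp only [integral_const, probReal_univ, one_smul] at htri
  linarith

lemma setAverage_abs_sub_setAverage_le (hs : μ s ≠ ⊤) {b : α → ℝ} (hb : IntegrableOn b s μ)
    (a : ℝ) : ⨍ y in s, |b y - ⨍ z in s, b z ∂μ| ∂μ ≤ 2 * ⨍ y in s, |a - b y| ∂μ := by
  rcases eq_or_ne (μ s) 0 with hs0 | hs0
  · simp [Measure.restrict_eq_zero.2 hs0]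
  have := cond_isProbabilityMeasure_of_finite hs0 hs
  simp only [setAverage_eq_integral_cond]
  exact integral_abs_sub_integral_le (hb.integrable_cond hs0) a

lemma setAverage_le_setAverage_add (hs : μ s ≠ ⊤) {u v : α → ℝ}
    (hu : IntegrableOn u s μ) (hv : IntegrableOn v s μ) {c : ℝ} (hc : 0 ≤ c)
    (h : ∀ y, u y ≤ v y + c) :
    ⨍ y in s, u y ∂μ ≤ (⨍ y in s, v y ∂μ) + c := by
  rcases eq_or_ne (μ s) 0 with hs0 | hs0
  · simpa [Measure.restrict_eq_zero.2 hs0] using hc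
  have := cond_isProbabilityMeasure_of_finite hs0 hs
  simp only [setAverage_eq_integral_cond]
  calc ∫ y, u y ∂μ[|s] ≤ ∫ y, (v y + c) ∂μ[|s] :=
        integral_mono (hu.integrable_cond hs0) ((hv.integrable_cond hs0).add (integrable_const c)) h
    _ = _ := by simp [integral_add (hv.integrable_cond hs0) (integrable_const c)]

end Average

section Differentiation

variable {X : Type*} [PseudoMetricSpace X] [MeasurableSpace X] [BorelSpace X]
  [SecondCountableTopology X] {μ : Measure X} [IsLocallyFiniteMeasure μ]
  [IsUnifLocDoublingMeasure μ] {F : Type*} [NormedAddCommGroup F]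

lemma ae_exists_forall_setAverage_closedBall_norm_le {g : X → F} (hg : LocallyIntegrable g μ) :
    ∀ᵐ x ∂μ, ∃ ε > 0, ∀ z r, 0 < r → r ≤ ε → x ∈ closedBall z r →
      ⨍ y in closedBall z r, ‖g y‖ ∂μ ≤ ‖g x‖ + 1 := by
  set v := IsUnifLocDoublingMeasure.vitaliFamily μ 1
  filter_upwards [v.ae_tendsto_average_norm_sub hg] with x hx
  have hsmall : ∀ᶠ a in v.filterAt x, μ a < ⊤ ∧ IntegrableOn g a μ ∧
      ⨍ y in a, ‖g y - g x‖ ∂μ < 1 :=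
    (v.eventually_measure_lt_top x).and
      ((v.eventually_filterAt_integrableOn x hg).and (hx.eventually (gt_mem_nhds one_pos)))
  obtain ⟨ε, hε, hball⟩ := v.eventually_filterAt_iff.1 hsmall
  refine ⟨ε / 2, half_pos hε, fun z r hr hrε hxz => ?_⟩
  have hxz' : dist x z ≤ 1 * r := by rw [one_mul]; exact hxz
  obtain ⟨hfin, hint, hosc⟩ := hball _
    (IsUnifLocDoublingMeasure.closedBall_mem_vitaliFamily_of_dist_le_mul μ hxz' hr)
    (closedBall_subset_closedBall' (by rw [dist_comm]; linarith))
  refine (setAverage_le_setAverage_add (v := fun y => ‖g y - g x‖) hfin.ne hint.norm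
    (hint.sub (integrableOn_const hfin.ne)).norm (norm_nonneg _)
    fun y => norm_le_norm_sub_add (g y) (g x)).trans (by linarith)

end Differentiation

section AddHaar

variable {E : Type*} [NormedAddCommGroup E] [NormedSpace ℝ E] [FiniteDimensional ℝ E]
  [MeasurableSpace E] [BorelSpace E] {μ : Measure E} [μ.IsAddHaarMeasure]
  {F : Type*} [NormedAddCommGroup F]

lemma ball_ae_eq_closedBall (x : E) {r : ℝ} (hr : r ≠ 0) : ball x r =ᵐ[μ] closedBall x r :=
  ball_subset_closedBall.eventuallyLE.antisymm <|
    ae_le_set.2 <| by rw [closedBall_sdiff_ball]; exact Measure.addHaar_sphere_of_ne_zero μ x hr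

lemma setAverage_ball_le_of_le_radius {g : E → ℝ} (hg : Integrable g μ) (hg0 : 0 ≤ g)
    {ε r : ℝ} (hε : 0 < ε) (hεr : ε ≤ r) (z : E) :
    ⨍ y in ball z r, g y ∂μ ≤ (μ.real (ball 0 ε))⁻¹ * ∫ y, g y ∂μ := by
  have hpos : 0 < μ.real (ball 0 ε) :=
    ENNReal.toReal_pos (measure_ball_pos μ 0 hε).ne' measure_ball_lt_top.ne
  have hmono : μ.real (ball 0 ε) ≤ μ.real (ball z r) := by
    rw [measureReal_def, measureReal_def, Measure.addHaar_ball_center μ z]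
    exact ENNReal.toReal_mono measure_ball_lt_top.ne (measure_mono (ball_subset_ball hεr))
  rw [setAverage_eq, smul_eq_mul]
  exact mul_le_mul (inv_anti₀ hpos hmono)
    (setIntegral_le_integral hg (.of_forall hg0))
    (setIntegral_nonneg measurableSet_ball fun y _ => hg0 y) (inv_nonneg.2 hpos.le)

lemma ae_exists_forall_setAverage_ball_norm_le {g : E → F} (hg : Integrable g μ) :
    ∀ᵐ x ∂μ, ∃ M, ∀ z r, 0 < r → x ∈ ball z r → ⨍ y in ball z r, ‖g y‖ ∂μ ≤ M := by
  filter_upwards [ae_exists_forall_setAverage_closedBall_norm_le hg.locallyIntegrable]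
    with x ⟨ε, hε, hsmall⟩
  refine ⟨max (‖g x‖ + 1) ((μ.real (ball 0 ε))⁻¹ * ∫ y, ‖g y‖ ∂μ), fun z r hr hx => ?_⟩
  rcases le_or_gt r ε with hrε | hεr
  · rw [setAverage_congr (ball_ae_eq_closedBall z hr.ne')]
    exact le_max_of_le_left (hsmall z r hr hrε (ball_subset_closedBall hx))
  · exact le_max_of_le_right
      (setAverage_ball_le_of_le_radius hg.norm (fun _ => norm_nonneg _) hε hεr.le z)

end AddHaar

lemma mul_abs_indicator_one {α : Type*} (s : Set α) (u : α → ℝ) :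
    (fun y => u y * |s.indicator 1 y|) = s.indicator u := by
  funext y
  by_cases hy : y ∈ s <;> simp [hy]

section Orlicz

variable {α : Type*} [MeasurableSpace α] {μ : Measure α} {s : Set α}

lemma lintegral_ofReal_LlogL_indicator_one (hs : MeasurableSet s) :
    ∫⁻ x, ENNReal.ofReal (|s.indicator 1 x| * (1 + max (Real.log |s.indicator 1 x|) 0)) ∂μ =
      μ s := by
  rw [← lintegral_indicator_one hs]
  congr 1 with x
  by_cases hx : x ∈ s <;> simp [hx]

lemma integral_LlogL_indicator_one_div (hs : MeasurableSet s) {l : ℝ} (hl : 1 ≤ l) :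
    ∫ x, (|s.indicator 1 x| / l) * (1 + max (Real.log (|s.indicator 1 x| / l)) 0) ∂μ =
      μ.real s / l := by
  have hlog : max (-Real.log l) 0 = 0 := max_eq_right (neg_nonpos.2 (Real.log_nonneg hl))
  have hfun : (fun x => (|s.indicator 1 x| / l) * (1 + max (Real.log (|s.indicator 1 x| / l)) 0))
      = s.indicator fun _ => 1 / l := by
    funext x
    by_cases hx : x ∈ s <;> simp [hx, hlog]
  rw [hfun, integral_indicator_const _ hs, smul_eq_mul, mul_one_div]

end Orlicz

section MaximalCommutator

variable {n : ℕ} {b : (Fin n → ℝ) → ℝ} {s : Set (Fin n → ℝ)}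

/-- An unbounded `⨆` in `ℝ` is `0`: `maximalComm` dominates its terms only where this family is
bounded. -/
lemma ae_bddAbove_maximalComm_indicator (hs : MeasurableSet s) (hs' : volume s ≠ ⊤)
    (hb : IntegrableOn b s) :
    ∀ᵐ x, BddAbove (Set.range fun Q : {Q : (Fin n → ℝ) × ℝ // 0 < Q.2 ∧ x ∈ ball Q.1 Q.2} =>
      ⨍ y in ball Q.1.1 Q.1.2, |b x - b y| * |s.indicator 1 y|) := by
  filter_upwards [ae_exists_forall_setAverage_ball_norm_le (hb.integrable_indicator hs)]
    with x ⟨M, hM⟩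
  refine ⟨M + |b x|, ?_⟩
  rintro _ ⟨⟨⟨z, r⟩, hr, hx⟩, rfl⟩
  have hint : Integrable fun y => |b x - b y| * |s.indicator 1 y| := by
    rw [mul_abs_indicator_one]
    exact IntegrableOn.integrable_indicator ((integrableOn_const hs').sub hb).abs hs
  refine (setAverage_le_setAverage_add measure_ball_lt_top.ne hint.integrableOn
    (hb.integrable_indicator hs).norm.integrableOn (abs_nonneg _) fun y => ?_).trans
    (by linarith [hM z r hr hx])
  by_cases hy : y ∈ s
  · simpa [hy, add_comm] using abs_sub (b x) (b y)
  · simp [hy]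

lemma ae_setAverage_abs_sub_setAverage_le_maximalComm {c : Fin n → ℝ} {r : ℝ}
    (hb : IntegrableOn b (ball c r)) :
    ∀ᵐ x, x ∈ ball c r → ⨍ y in ball c r, |b y - ⨍ z in ball c r, b z| ≤
      2 * maximalComm b ((ball c r).indicator 1) x := by
  filter_upwards [ae_bddAbove_maximalComm_indicator measurableSet_ball measure_ball_lt_top.ne hb]
    with x hbdd hx
  have hr : 0 < r := pos_of_mem_ball hx
  calc _ ≤ 2 * ⨍ y in ball c r, |b x - b y| :=
        setAverage_abs_sub_setAverage_le measure_ball_lt_top.ne hb (b x)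
    _ = 2 * ⨍ y in ball c r, |b x - b y| * |(ball c r).indicator 1 y| := by
        rw [mul_abs_indicator_one]
        congr 1
        exact setAverage_congr_fun measurableSet_ball
          (.of_forall fun y hy => (Set.indicator_of_mem hy (fun y => |b x - b y|)).symm)
    _ ≤ _ := by
        gcongr
        exact le_ciSup hbdd ⟨(c, r), hr, hx⟩

end MaximalCommutator

/-- if the maximal commutator `C_b` satisfies the weak-type
`L(1+log⁺L)` estimate, then `b ∈ BMO(ℝⁿ)`, i.e. its mean oscillations over
cubes are uniformly bounded. -/
theorem bmo_of_weak_LlogL_maximalComm {n : ℕ} (b : (Fin n → ℝ) → ℝ)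
    (hb : LocallyIntegrable b volume) (C : ℝ) (hC : 0 < C)
    (h : ∀ f : (Fin n → ℝ) → ℝ, Measurable f →
      (∫⁻ x, ENNReal.ofReal (|f x| * (1 + max (Real.log |f x|) 0)) < ⊤) →
      ∀ l : ℝ, 0 < l →
        volume {x | l < maximalComm b f x} ≤
          ENNReal.ofReal (C * ∫ x,
            (|f x| / l) * (1 + max (Real.log (|f x| / l)) 0))) :
    ∃ B : ℝ, ∀ (c : Fin n → ℝ) (r : ℝ), 0 < r →
      ⨍ x in ball c r, |b x - ⨍ y in ball c r, b y| ≤ B := by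
  refine ⟨2 * (C + 1), fun c r hr => ?_⟩
  by_contra! hosc
  set Q := ball c r
  have hbQ : IntegrableOn b Q :=
    (hb.integrableOn_isCompact (isCompact_closedBall c r)).mono_set ball_subset_closedBall
  have hlevel : volume Q ≤ volume {x | C + 1 < maximalComm b (Q.indicator 1) x} :=
    measure_mono_ae <| by
      filter_upwards [ae_setAverage_abs_sub_setAverage_le_maximalComm hbQ] with x hx hxQ
      show C + 1 < _
      linarith [hx hxQ]
  have hweak := h (Q.indicator 1) (measurable_one.indicator measurableSet_ball)
    (by rw [lintegral_ofReal_LlogL_indicator_one measurableSet_ball]; exact measure_ball_lt_top)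
    (C + 1) (by linarith)
  rw [integral_LlogL_indicator_one_div measurableSet_ball (by linarith)] at hweak
  have hQpos : 0 < volume.real Q :=
    ENNReal.toReal_pos (measure_ball_pos _ c hr).ne' measure_ball_lt_top.ne
  have hQle : volume.real Q ≤ C * (volume.real Q / (C + 1)) :=
    ENNReal.toReal_le_of_le_ofReal (by positivity) (hlevel.trans hweak)
  rw [mul_div_assoc', le_div_iff₀ (by linarith)] at hQle
  linarith
end
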